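/- arXiv:2212.06262 — 4 statements merged into one kernel-verified Lean document; each statement's English description precedes it below -/
import Mathlib

section
/- The category of complete, bornologically torsionfree modules over a complete discrete valuation ring V is closed under kernels and arbitrary products; in particular it is a complete category. -/
/-!
Modulo the principal ideal `(π ^ n)`, `x ≡ y` means `x - y = π ^ n • w` for some `w`, so
congruences in a product are checked coordinatewise and a product of `π`-adically complete modules
is complete. A bounded subset of `ker f` lies in `P ∩ ker f`, where `P ⊆ M` is bounded and complete
and `f P` lies in a bounded complete `Q ⊆ N`. This is the kernel of `f : P → Q`, which is complete:
the limit `L` of a Cauchy sequence in it has `f L ≡ 0` modulo every `π ^ n` in the separated module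
`Q`, and a witness `π ^ n • w = x - L` lies in the kernel because `Q` has no `π`-torsion.
Torsionfreeness passes to subspaces and products because `π⁻¹ · S` is compatible with embeddings
and projections.
-/

structure ModuleBornology (V M : Type) [CommRing V] [AddCommGroup M] [Module V M] :
    Type where
  IsBounded : Set M → Prop
  isBounded_subset : ∀ {S T : Set M}, S ⊆ T → IsBounded T → IsBounded S
  isBounded_union : ∀ {S T : Set M}, IsBounded S → IsBounded T → IsBounded (S ∪ T)
  isBounded_of_finite : ∀ {S : Set M}, S.Finite → IsBounded S
  exists_bounded_submodule : ∀ {S : Set M}, IsBounded S →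
    ∃ N : Submodule V M, IsBounded (N : Set M) ∧ S ⊆ (N : Set M)

def ModuleBornology.IsCompleteWrt {V M : Type} [CommRing V] [AddCommGroup M] [Module V M]
    (π : V) (B : ModuleBornology V M) : Prop :=
  ∀ {S : Set M}, B.IsBounded S → ∃ N : Submodule V M,
    B.IsBounded (N : Set M) ∧ S ⊆ (N : Set M) ∧ IsAdicComplete (Ideal.span {π}) N

/-- `{x | π • x ∈ S}` is the set `π⁻¹ · S` of the paper. -/
def ModuleBornology.IsTorsionfreeWrt {V M : Type} [CommRing V] [AddCommGroup M] [Module V M]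
    (π : V) (B : ModuleBornology V M) : Prop :=
  Function.Injective (fun x : M => π • x) ∧
    ∀ {S : Set M}, B.IsBounded S → B.IsBounded {x : M | π • x ∈ S}

def IsBoundedLinMap {V M N : Type} [CommRing V] [AddCommGroup M] [Module V M]
    [AddCommGroup N] [Module V N] (BM : ModuleBornology V M) (BN : ModuleBornology V N)
    (f : M →ₗ[V] N) : Prop :=
  ∀ {S : Set M}, BM.IsBounded S → BN.IsBounded (f '' S)

/-- A bornological isomorphism onto the image with its subspace bornology. -/
def IsBornologicalEmbedding {V M N : Type} [CommRing V] [AddCommGroup M] [Module V M]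
    [AddCommGroup N] [Module V N] (BM : ModuleBornology V M) (BN : ModuleBornology V N)
    (f : M →ₗ[V] N) : Prop :=
  Function.Injective f ∧ ∀ S : Set M, BM.IsBounded S ↔ BN.IsBounded (f '' S)

open Function

section AdicComplete

variable {V : Type*} [CommRing V] {M N : Type*} [AddCommGroup M] [Module V M]
  [AddCommGroup N] [Module V N]

theorem SModEq.map_smul_top {I : Ideal V} {x y : M}
    (h : x ≡ y [SMOD (I • ⊤ : Submodule V M)]) (f : M →ₗ[V] N) :
    f x ≡ f y [SMOD (I • ⊤ : Submodule V N)] := by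
  rw [SModEq.sub_mem, ← map_sub]
  exact Submodule.smul_top_le_comap_smul_top _ f (SModEq.sub_mem.mp h)

theorem smodEq_span_singleton_pow_smul_top_iff (π : V) (n : ℕ) {x y : M} :
    x ≡ y [SMOD ((Ideal.span {π}) ^ n • ⊤ : Submodule V M)] ↔ ∃ w : M, π ^ n • w = x - y := by
  simp [SModEq.sub_mem, Ideal.span_singleton_pow, Submodule.ideal_span_singleton_smul,
    Submodule.mem_smul_pointwise_iff_exists]

theorem IsHausdorff.of_injective (I : Ideal V) [IsHausdorff I N] (f : M →ₗ[V] N)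
    (hf : Injective f) : IsHausdorff I M :=
  ⟨fun x hx => hf <| (map_zero f).symm ▸
    IsHausdorff.haus' (I := I) (f x) fun n => by simpa using (hx n).map_smul_top f⟩

theorem IsAdicComplete.of_linearEquiv (I : Ideal V) [IsAdicComplete I M] (e : M ≃ₗ[V] N) :
    IsAdicComplete I N where
  toIsHausdorff := .of_injective I e.symm.toLinearMap e.symm.injective
  prec' c hc := by
    obtain ⟨L, hL⟩ := IsPrecomplete.prec' (I := I) (e.symm ∘ c)
      fun hmn => (hc hmn).map_smul_top e.symm.toLinearMap
    exact ⟨e L, fun n => by simpa using (hL n).map_smul_top e.toLinearMap⟩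

theorem IsAdicComplete.range (I : Ideal V) [IsAdicComplete I M] (f : M →ₗ[V] N)
    (hf : Injective f) : IsAdicComplete I (LinearMap.range f) :=
  .of_linearEquiv I (LinearEquiv.ofInjective f hf)

theorem IsAdicComplete.ker (π : V) [IsAdicComplete (Ideal.span {π}) M]
    [IsHausdorff (Ideal.span {π}) N] (hN : IsSMulRegular N π) (g : M →ₗ[V] N) :
    IsAdicComplete (Ideal.span {π}) (LinearMap.ker g) where
  toIsHausdorff := .of_injective _ (LinearMap.ker g).subtype Subtype.val_injective
  prec' c hc := by
    obtain ⟨L, hL⟩ := IsPrecomplete.prec' (I := Ideal.span {π}) (fun n => (c n : M))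
      fun hmn => (hc hmn).map_smul_top (LinearMap.ker g).subtype
    have hgL : g L = 0 := IsHausdorff.haus' (I := Ideal.span {π}) _ fun n => by
      simpa using ((hL n).map_smul_top g).symm
    refine ⟨⟨L, hgL⟩, fun n => ?_⟩
    obtain ⟨w, hw⟩ := (smodEq_span_singleton_pow_smul_top_iff π n).mp (hL n)
    have hgw : g w = 0 := hN.pow n <| by
      simp only [← map_smul, hw, map_sub, LinearMap.map_coe_ker, hgL, sub_zero, smul_zero]
    exact (smodEq_span_singleton_pow_smul_top_iff π n).mpr ⟨⟨w, hgw⟩, Subtype.ext hw⟩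

theorem IsAdicComplete.pi (π : V) {ι : Type*} {M : ι → Type*} [∀ i, AddCommGroup (M i)]
    [∀ i, Module V (M i)] [∀ i, IsAdicComplete (Ideal.span {π}) (M i)] :
    IsAdicComplete (Ideal.span {π}) (∀ i, M i) where
  haus' x hx := funext fun i => IsHausdorff.haus' (I := Ideal.span {π}) (x i) fun n => by
    simpa using (hx n).map_smul_top (LinearMap.proj i)
  prec' c hc := by
    choose L hL using fun i => IsPrecomplete.prec' (I := Ideal.span {π}) (fun n => c n i)
      fun hmn => (hc hmn).map_smul_top (LinearMap.proj i)
    refine ⟨L, fun n => (smodEq_span_singleton_pow_smul_top_iff π n).mpr ?_⟩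
    choose w hw using fun i => (smodEq_span_singleton_pow_smul_top_iff π n).mp (hL i n)
    exact ⟨w, funext hw⟩

end AdicComplete

section Bornology

variable {V : Type} [CommRing V] (π : V)

theorem IsBornologicalEmbedding.isTorsionfreeWrt {K M : Type} [AddCommGroup K] [Module V K]
    [AddCommGroup M] [Module V M] {BK : ModuleBornology V K} {BM : ModuleBornology V M}
    {ι : K →ₗ[V] M} (hι : IsBornologicalEmbedding BK BM ι) (hM : BM.IsTorsionfreeWrt π) :
    BK.IsTorsionfreeWrt π := by
  refine ⟨fun x y hxy => hι.1 (hM.1 ?_), fun {S} hS => (hι.2 _).mpr ?_⟩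
  · simp only [← map_smul, hxy]
  · refine BM.isBounded_subset ?_ (hM.2 ((hι.2 S).mp hS))
    rintro _ ⟨x, hx, rfl⟩
    exact ⟨π • x, hx, map_smul ι π x⟩

theorem ModuleBornology.isTorsionfreeWrt_pi {ι : Type} {M : ι → Type} [∀ i, AddCommGroup (M i)]
    [∀ i, Module V (M i)] {BM : ∀ i, ModuleBornology V (M i)}
    (hM : ∀ i, (BM i).IsTorsionfreeWrt π) {BP : ModuleBornology V (∀ i, M i)}
    (hBP : ∀ S, BP.IsBounded S ↔ ∀ i, (BM i).IsBounded ((fun x => x i) '' S)) :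
    BP.IsTorsionfreeWrt π := by
  refine ⟨fun x y hxy => funext fun i => (hM i).1 (congrFun hxy i), fun {S} hS => ?_⟩
  refine (hBP _).mpr fun i => (BM i).isBounded_subset ?_ ((hM i).2 ((hBP S).mp hS i))
  rintro _ ⟨x, hx, rfl⟩
  exact ⟨π • x, hx, rfl⟩

theorem ModuleBornology.isCompleteWrt_ker {M N : Type} [AddCommGroup M] [Module V M]
    [AddCommGroup N] [Module V N] {BM : ModuleBornology V M} {BN : ModuleBornology V N}
    (hM : BM.IsCompleteWrt π) (hN : BN.IsCompleteWrt π) (hNπ : IsSMulRegular N π)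
    {f : M →ₗ[V] N} (hf : IsBoundedLinMap BM BN f) {BK : ModuleBornology V (LinearMap.ker f)}
    (hBK : ∀ S, BK.IsBounded S ↔ BM.IsBounded (((↑) : LinearMap.ker f → M) '' S)) :
    BK.IsCompleteWrt π := by
  intro S hS
  obtain ⟨P, hPb, hSP, hPc⟩ := hM ((hBK S).mp hS)
  obtain ⟨Q, -, hfPQ, hQc⟩ := hN (hf hPb)
  let g : P →ₗ[V] Q := (f ∘ₗ P.subtype).codRestrict Q fun x => hfPQ ⟨x, x.2, rfl⟩
  have := IsAdicComplete.ker π (hNπ.submodule Q π) g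
  let incl : LinearMap.ker g →ₗ[V] LinearMap.ker f :=
    (P.subtype ∘ₗ (LinearMap.ker g).subtype).codRestrict _ fun x => congrArg Subtype.val x.2
  have hincl : Injective incl := fun x y hxy => Subtype.ext (Subtype.ext (congrArg Subtype.val hxy :))
  refine ⟨LinearMap.range incl, (hBK _).mpr (BM.isBounded_subset ?_ hPb),
    fun s hs => ⟨⟨⟨s, hSP ⟨s, hs, rfl⟩⟩, Subtype.ext s.2⟩, rfl⟩, IsAdicComplete.range _ incl hincl⟩
  rintro _ ⟨_, ⟨x, rfl⟩, rfl⟩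
  exact (x : P).2

theorem ModuleBornology.isCompleteWrt_pi {ι : Type} {M : ι → Type} [∀ i, AddCommGroup (M i)]
    [∀ i, Module V (M i)] {BM : ∀ i, ModuleBornology V (M i)}
    (hM : ∀ i, (BM i).IsCompleteWrt π) {BP : ModuleBornology V (∀ i, M i)}
    (hBP : ∀ S, BP.IsBounded S ↔ ∀ i, (BM i).IsBounded ((fun x => x i) '' S)) :
    BP.IsCompleteWrt π := by
  intro S hS
  choose P hPb hSP hPc using fun i => hM i ((hBP S).mp hS i)
  have := IsAdicComplete.pi π (M := fun i => P i)
  let φ : (∀ i, P i) →ₗ[V] ∀ i, M i := LinearMap.piMap fun i => (P i).subtype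
  have hφ : Injective φ := fun x y hxy => funext fun i => Subtype.ext (congrFun hxy i)
  refine ⟨LinearMap.range φ, (hBP _).mpr fun i => (BM i).isBounded_subset ?_ (hPb i),
    fun s hs => ⟨fun i => ⟨s i, hSP i ⟨s, hs, rfl⟩⟩, rfl⟩, IsAdicComplete.range _ φ hφ⟩
  rintro _ ⟨_, ⟨x, rfl⟩, rfl⟩
  exact (x i).2

end Bornology

theorem stmt0_general {V : Type} [CommRing V] (π : V) :
    -- closure under kernels
    (∀ (M N : Type) [AddCommGroup M] [Module V M] [AddCommGroup N] [Module V N]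
      (BM : ModuleBornology V M) (BN : ModuleBornology V N),
      BM.IsCompleteWrt π → BM.IsTorsionfreeWrt π →
      BN.IsCompleteWrt π → BN.IsTorsionfreeWrt π →
      ∀ (f : M →ₗ[V] N), IsBoundedLinMap BM BN f →
      ∀ (BK : ModuleBornology V (LinearMap.ker f)),
        (∀ S : Set (LinearMap.ker f),
          BK.IsBounded S ↔ BM.IsBounded (((↑) : LinearMap.ker f → M) '' S)) →
        BK.IsCompleteWrt π ∧ BK.IsTorsionfreeWrt π) ∧
    -- closure under arbitrary products
    (∀ (ι : Type) (M : ι → Type) [∀ i, AddCommGroup (M i)] [∀ i, Module V (M i)]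
      (BM : ∀ i, ModuleBornology V (M i)),
      (∀ i, (BM i).IsCompleteWrt π) → (∀ i, (BM i).IsTorsionfreeWrt π) →
      ∀ (BP : ModuleBornology V (∀ i, M i)),
        (∀ S : Set (∀ i, M i),
          BP.IsBounded S ↔ ∀ i, (BM i).IsBounded ((fun x => x i) '' S)) →
        BP.IsCompleteWrt π ∧ BP.IsTorsionfreeWrt π) := by
  refine ⟨fun M N _ _ _ _ BM BN hMc hMtf hNc hNtf f hf BK hBK => ⟨?_, ?_⟩,
    fun ι M _ _ BM hMc hMtf BP hBP => ⟨?_, ?_⟩⟩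
  · exact ModuleBornology.isCompleteWrt_ker π hMc hNc hNtf.1 hf hBK
  · exact IsBornologicalEmbedding.isTorsionfreeWrt π
      (ι := (LinearMap.ker f).subtype) ⟨Subtype.val_injective, hBK⟩ hMtf
  · exact ModuleBornology.isCompleteWrt_pi π hMc hBP
  · exact ModuleBornology.isTorsionfreeWrt_pi π hMtf hBP

/-- Over a complete discrete valuation ring `V` (with uniformiser `π`),
the category of complete, bornologically torsionfree bornological `V`-modules is closed
under kernels (with the subspace bornology) and arbitrary products (with the product
bornology); in particular it is a complete category. -/
theorem stmt0 {V : Type} [CommRing V] [IsDomain V] [IsDiscreteValuationRing V]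
    (π : V) (hπ : Irreducible π) (hV : IsAdicComplete (Ideal.span {π}) V) :
    -- closure under kernels
    (∀ (M N : Type) [AddCommGroup M] [Module V M] [AddCommGroup N] [Module V N]
      (BM : ModuleBornology V M) (BN : ModuleBornology V N),
      BM.IsCompleteWrt π → BM.IsTorsionfreeWrt π →
      BN.IsCompleteWrt π → BN.IsTorsionfreeWrt π →
      ∀ (f : M →ₗ[V] N), IsBoundedLinMap BM BN f →
      ∀ (BK : ModuleBornology V (LinearMap.ker f)),
        (∀ S : Set (LinearMap.ker f),
          BK.IsBounded S ↔ BM.IsBounded (((↑) : LinearMap.ker f → M) '' S)) →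
        BK.IsCompleteWrt π ∧ BK.IsTorsionfreeWrt π) ∧
    -- closure under arbitrary products
    (∀ (ι : Type) (M : ι → Type) [∀ i, AddCommGroup (M i)] [∀ i, Module V (M i)]
      (BM : ∀ i, ModuleBornology V (M i)),
      (∀ i, (BM i).IsCompleteWrt π) → (∀ i, (BM i).IsTorsionfreeWrt π) →
      ∀ (BP : ModuleBornology V (∀ i, M i)),
        (∀ S : Set (∀ i, M i),
          BP.IsBounded S ↔ ∀ i, (BM i).IsBounded ((fun x => x i) '' S)) →
        BP.IsCompleteWrt π ∧ BP.IsTorsionfreeWrt π) :=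
  stmt0_general π
end

section
/- If M is a bornologically torsionfree bornological V-module, then the natural map M → M ⊗ F into its rationalization is a bornological embedding, and consequently any product of bornologically torsionfree bornological V-modules is bornologically torsionfree. -/
open scoped TensorProduct

/-!
Over a discrete valuation ring every nonzero scalar is a unit times a power of `π`, so
`π`-torsionfreeness is torsionfreeness and `M → M ⊗ F` is injective. Iterating the defining
property of bornological torsionfreeness, `{x | πⁿ • x ∈ S}` is bounded for bounded `S`; this is
exactly what is needed to pull a bounded subset of `M ⊗ F` back to `M`. Both conditions of
torsionfreeness are checked coordinatewise on a product.
-/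

lemma IsDiscreteValuationRing.isTorsionFree_of_smul_injective {V M : Type*} [CommRing V]
    [IsDomain V] [IsDiscreteValuationRing V] [AddCommGroup M] [Module V M] {π : V}
    (hπ : Irreducible π) (h : Function.Injective (fun x : M => π • x)) :
    Module.IsTorsionFree V M where
  isSMulRegular r hr := by
    obtain ⟨n, u, rfl⟩ := eq_unit_mul_pow_irreducible hr.ne_zero hπ
    exact (u.isSMulRegular M).mul (IsSMulRegular.pow n h)

lemma TensorProduct.mk_flip_one_injective_of_isFractionRing (R M A : Type*) [CommRing R]
    [AddCommGroup M] [Module R M] [Module.IsTorsionFree R M] [CommRing A] [Algebra R A]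
    [IsFractionRing R A] :
    Function.Injective ((TensorProduct.mk R M A).flip 1) := by
  have hmk : Function.Injective (TensorProduct.mk R A M 1) :=
    (IsLocalizedModule.injective_iff_isRegular (nonZeroDivisors R) _).2 fun c =>
      (isRegular_iff_mem_nonZeroDivisors.2 c.2).isSMulRegular
  have hcomm : (TensorProduct.mk R M A).flip 1 =
      (TensorProduct.comm R A M).toLinearMap ∘ₗ TensorProduct.mk R A M 1 := by
    ext; rfl
  rw [hcomm, LinearMap.coe_comp]
  exact (TensorProduct.comm R A M).injective.comp hmk

namespace ModuleBornology.IsTorsionfreeWrt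

variable {V M : Type} [CommRing V] [AddCommGroup M] [Module V M] {π : V} {B : ModuleBornology V M}

lemma isBounded_preimage_pow_smul (h : B.IsTorsionfreeWrt π) (n : ℕ) {S : Set M}
    (hS : B.IsBounded S) : B.IsBounded {x : M | π ^ n • x ∈ S} := by
  induction n with
  | zero => simpa using hS
  | succ n ih =>
    refine B.isBounded_subset (fun x hx => ?_) (h.2 ih)
    simpa only [Set.mem_ofPred_eq, smul_smul, ← pow_succ] using hx

lemma isBornologicalEmbedding {N : Type} [AddCommGroup N] [Module V N]
    (h : B.IsTorsionfreeWrt π) {BN : ModuleBornology V N} {f : M →ₗ[V] N}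
    (hf : Function.Injective f)
    (hBN : ∀ T : Set N, BN.IsBounded T ↔
      ∃ S : Set M, B.IsBounded S ∧ ∃ n : ℕ, ∀ y ∈ T, ∃ x ∈ S, π ^ n • y = f x) :
    IsBornologicalEmbedding B BN f := by
  refine ⟨hf, fun S => ⟨fun hS => (hBN _).2 ⟨S, hS, 0, ?_⟩, fun hS => ?_⟩⟩
  · rintro _ ⟨x, hx, rfl⟩
    exact ⟨x, hx, by rw [pow_zero, one_smul]⟩
  · obtain ⟨S', hS', n, hn⟩ := (hBN _).1 hS
    refine B.isBounded_subset (fun s hs => ?_) (h.isBounded_preimage_pow_smul n hS')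
    obtain ⟨x, hx, hfx⟩ := hn (f s) ⟨s, hs, rfl⟩
    rw [← map_smul] at hfx
    rwa [Set.mem_ofPred_eq, hf hfx]

lemma pi {ι : Type} {M : ι → Type} [∀ i, AddCommGroup (M i)] [∀ i, Module V (M i)]
    {BM : ∀ i, ModuleBornology V (M i)} (h : ∀ i, (BM i).IsTorsionfreeWrt π)
    {BP : ModuleBornology V (∀ i, M i)}
    (hBP : ∀ S : Set (∀ i, M i), BP.IsBounded S ↔ ∀ i, (BM i).IsBounded ((fun x => x i) '' S)) :
    BP.IsTorsionfreeWrt π := by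
  refine ⟨fun x y hxy => funext fun i => (h i).1 (congrFun hxy i), fun {S} hS => ?_⟩
  refine (hBP _).2 fun i => (BM i).isBounded_subset ?_ ((h i).2 ((hBP S).1 hS i))
  rintro _ ⟨x, hx, rfl⟩
  exact ⟨π • x, hx, rfl⟩

end ModuleBornology.IsTorsionfreeWrt

/-- Let `V` be a complete discrete valuation ring with uniformiser `π`
and fraction field `F`.  If `M` is a bornologically torsionfree bornological `V`-module,
then the natural map `M → M ⊗ F` into its rationalization is a bornological embedding
(where a subset of `M ⊗ F` is bounded iff some `πⁿ`-multiple of it lies in the image of a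
bounded subset of `M`), and consequently any product of bornologically torsionfree
bornological `V`-modules (with the product bornology) is bornologically torsionfree. -/
theorem stmt1 {V : Type} [CommRing V] [IsDomain V] [IsDiscreteValuationRing V]
    (π : V) (hπ : Irreducible π) :
    -- the natural map `M → M ⊗ F` is a bornological embedding
    (∀ (M : Type) [AddCommGroup M] [Module V M] (BM : ModuleBornology V M),
      BM.IsTorsionfreeWrt π →
      ∀ (BF : ModuleBornology V (M ⊗[V] FractionRing V)),
        (∀ T : Set (M ⊗[V] FractionRing V), BF.IsBounded T ↔
          ∃ S : Set M, BM.IsBounded S ∧ ∃ n : ℕ, ∀ y ∈ T, ∃ x ∈ S,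
            (π ^ n) • y = ((TensorProduct.mk V M (FractionRing V)).flip 1) x) →
        IsBornologicalEmbedding BM BF ((TensorProduct.mk V M (FractionRing V)).flip 1)) ∧
    -- consequently, products of torsionfree modules are torsionfree
    (∀ (ι : Type) (M : ι → Type) [∀ i, AddCommGroup (M i)] [∀ i, Module V (M i)]
      (BM : ∀ i, ModuleBornology V (M i)),
      (∀ i, (BM i).IsTorsionfreeWrt π) →
      ∀ (BP : ModuleBornology V (∀ i, M i)),
        (∀ S : Set (∀ i, M i),
          BP.IsBounded S ↔ ∀ i, (BM i).IsBounded ((fun x => x i) '' S)) →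
        BP.IsTorsionfreeWrt π) := by
  refine ⟨fun M _ _ BM htf BF hBF => ?_, fun ι M _ _ BM htf BP hBP => .pi htf hBP⟩
  have := IsDiscreteValuationRing.isTorsionFree_of_smul_injective hπ htf.1
  exact htf.isBornologicalEmbedding
    (TensorProduct.mk_flip_one_injective_of_isFractionRing V M (FractionRing V)) hBF
end

section
/- The functor KV_1^an is split exact: given a split extension A ↣ B ↠ C of complete, torsionfree bornological V-algebras, one has GL(A)' = GL(B)' ∩ GL(A), and the induced sequence KV_1^an(A) → KV_1^an(B) → KV_1^an(C) is exact with the first map injective. -/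
/-!
Everything is a diagram chase in the ladder formed by evaluation at `1`,
`GL(P̂ A) ↣ GL(P̂ B) ↠ GL(P̂ C)` over `GL(A) ↣ GL(B) ↠ GL(C)`. If `eB q` lies in `GL(A)`, then
`q * (sP (pP q))⁻¹` is a path with the same endpoint (its correction term evaluates to
`s (p (eB q)) = 1`) and lies in `GL(P̂ A)`; this gives `GL(A)' = GL(B)' ∩ GL(A)`, hence injectivity
on `KV₁^an`. Exactness in the middle uses that the split `sP` lifts every element of `GL(C)'` to
`GL(B)'`.
-/

namespace QuotientGroup

variable {G H K : Type*} [Group G] [Group H] [Group K]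

theorem map_injective_of_comap_le {N : Subgroup G} [N.Normal] {M : Subgroup H} [M.Normal]
    (f : G →* H) (h : N ≤ M.comap f) (hle : M.comap f ≤ N) :
    Function.Injective (map N M f h) := by
  rw [← MonoidHom.ker_eq_bot_iff, ker_map, Subgroup.map_eq_bot_iff, ker_mk']
  exact hle

theorem range_map_eq_ker_map {N : Subgroup G} [N.Normal] {M : Subgroup H} [M.Normal]
    {O : Subgroup K} [O.Normal] (i : G →* H) (p : H →* K) (hi : N ≤ M.comap i)
    (hp : M ≤ O.comap p) (hexact : i.range = p.ker) (hO : O ≤ M.map p) :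
    (map N M i hi).range = (map M O p hp).ker := by
  ext x
  induction x using QuotientGroup.induction_on with
  | H b =>
    constructor
    · rintro ⟨y, hy⟩
      induction y using QuotientGroup.induction_on with
      | H a =>
        have hpa : p (i a) = 1 := by
          rw [← MonoidHom.mem_ker, ← hexact]
          exact ⟨a, rfl⟩
        rw [← hy, MonoidHom.mem_ker, map_mk, map_mk, hpa]
        rfl
    · intro hb
      rw [MonoidHom.mem_ker, map_mk, eq_one_iff] at hb
      obtain ⟨m, hm, hpm⟩ := hO hb
      have hbm : b * m⁻¹ ∈ i.range := by
        rw [hexact, MonoidHom.mem_ker, map_mul, map_inv, hpm, mul_inv_cancel]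
      obtain ⟨a, ha⟩ := hbm
      refine ⟨a, ?_⟩
      rw [map_mk, ha, QuotientGroup.eq]
      simpa using hm

end QuotientGroup

namespace MonoidHom

variable {A B C PA PB PC : Type*} [Group A] [Group B] [Group C] [Group PA] [Group PB] [Group PC]

theorem range_inf_ker_le_range_comp {p : B →* C} {s : C →* B} {iP : PA →* PB} {pP : PB →* PC}
    {sP : PC →* PB} {eB : PB →* B} {eC : PC →* C} (hsplitP : pP.comp sP = MonoidHom.id PC)
    (hkerP : pP.ker ≤ iP.range) (hnat2 : eC.comp pP = p.comp eB)
    (hnat3 : eB.comp sP = s.comp eC) :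
    eB.range ⊓ p.ker ≤ (eB.comp iP).range := by
  rintro _ ⟨⟨q, rfl⟩, hq⟩
  have hcorr : eB (sP (pP q)) = 1 := by
    rw [← comp_apply eB sP, hnat3, comp_apply, ← comp_apply eC pP, hnat2, comp_apply,
      mem_ker.1 hq, map_one]
  have hqker : q * (sP (pP q))⁻¹ ∈ pP.ker := by
    rw [mem_ker, map_mul, map_inv, ← comp_apply pP sP, hsplitP, id_apply, mul_inv_cancel]
  obtain ⟨r, hr⟩ := hkerP hqker
  exact ⟨r, by rw [comp_apply, hr, map_mul, map_inv, hcorr, inv_one, mul_one]⟩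

theorem map_range_eq_range_inf_range {i : A →* B} {p : B →* C} {s : C →* B} {iP : PA →* PB}
    {pP : PB →* PC} {sP : PC →* PB} {eA : PA →* A} {eB : PB →* B} {eC : PC →* C}
    (hsplitP : pP.comp sP = MonoidHom.id PC) (hker : i.range = p.ker)
    (hkerP : iP.range = pP.ker) (hnat1 : eB.comp iP = i.comp eA)
    (hnat2 : eC.comp pP = p.comp eB) (hnat3 : eB.comp sP = s.comp eC) :
    eA.range.map i = eB.range ⊓ i.range := by
  refine le_antisymm (le_inf ?_ (Subgroup.map_le_range i _)) ?_
  · rw [← range_comp, ← hnat1, range_comp]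
    exact Subgroup.map_le_range eB _
  · rw [hker, ← range_comp, ← hnat1]
    exact range_inf_ker_le_range_comp hsplitP hkerP.ge hnat2 hnat3

theorem range_eq_map_range_of_surjective {p : B →* C} {pP : PB →* PC} {eB : PB →* B}
    {eC : PC →* C} (hpP : Function.Surjective pP)
    (hnat : eC.comp pP = p.comp eB) :
    eC.range = eB.range.map p := by
  rw [← range_comp, ← hnat, range_comp, range_eq_top.2 hpP, ← range_eq_map]

end MonoidHom

theorem stmt12_general {GA GB GC PGA PGB PGC : Type}
    [Group GA] [Group GB] [Group GC] [Group PGA] [Group PGB] [Group PGC]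
    (i : GA →* GB) (p : GB →* GC) (s : GC →* GB)
    (iP : PGA →* PGB) (pP : PGB →* PGC) (sP : PGC →* PGB)
    (eA : PGA →* GA) (eB : PGB →* GB) (eC : PGC →* GC)
    -- the extension is split
    (hsplitP : pP.comp sP = MonoidHom.id PGC)
    -- `GL` and `GL(P̂(−))` preserve kernels
    (hinj : Function.Injective i)
    (hker : i.range = p.ker) (hkerP : iP.range = pP.ker)
    -- naturality of the evaluation maps and of the splitting
    (hnat1 : eB.comp iP = i.comp eA) (hnat2 : eC.comp pP = p.comp eB)
    (hnat3 : eB.comp sP = s.comp eC)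
    [hNA : (eA.range).Normal] [hNB : (eB.range).Normal] [hNC : (eC.range).Normal] :
    -- `GL(A)' = GL(B)' ∩ GL(A)` (inside `GL(B)`)
    Subgroup.map i eA.range = eB.range ⊓ i.range ∧
    -- exactness of `KV₁^an(A) → KV₁^an(B) → KV₁^an(C)` with the first map injective
    ∃ (ibar : GA ⧸ eA.range →* GB ⧸ eB.range)
      (pbar : GB ⧸ eB.range →* GC ⧸ eC.range),
      (∀ g : GA, ibar (QuotientGroup.mk g) = QuotientGroup.mk (i g)) ∧
      (∀ g : GB, pbar (QuotientGroup.mk g) = QuotientGroup.mk (p g)) ∧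
      Function.Injective ibar ∧ ibar.range = pbar.ker := by
  have hmap := MonoidHom.map_range_eq_range_inf_range hsplitP hker hkerP hnat1 hnat2 hnat3
  have hcompA : eA.range ≤ eB.range.comap i := Subgroup.map_le_iff_le_comap.1 (hmap ▸ inf_le_left)
  have hrangeC : eC.range = eB.range.map p :=
    MonoidHom.range_eq_map_range_of_surjective (pP := pP)
      (Function.LeftInverse.surjective (DFunLike.congr_fun hsplitP)) hnat2
  have hcompB : eB.range ≤ eC.range.comap p := Subgroup.map_le_iff_le_comap.1 hrangeC.ge
  have hcomap : eB.range.comap i ≤ eA.range := fun a ha =>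
    (Subgroup.mem_map_iff_mem hinj).1 (hmap ▸ ⟨ha, a, rfl⟩)
  exact ⟨hmap, QuotientGroup.map _ _ i hcompA, QuotientGroup.map _ _ p hcompB,
    fun _ => rfl, fun _ => rfl, QuotientGroup.map_injective_of_comap_le i hcompA hcomap,
    QuotientGroup.range_map_eq_ker_map i p hcompA hcompB hker hrangeC.le⟩

/-- Split exactness of `KV₁^an`.  Given a split extension
`A ↣ B ↠ C` of complete, torsionfree bornological `V`-algebras, apply the functors
`GL` and `GL(P̂(−))` (which preserve kernels): we obtain groups
`GA = GL(A), GB = GL(B), GC = GL(C)` and `PGA = GL(P̂A), PGB = GL(P̂B), PGC = GL(P̂C)`,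
with induced maps `i, p` (and split `s`), their path-level analogues `iP, pP, sP`, and
evaluation-at-one homomorphisms `eA, eB, eC` commuting with everything.  With
`GL(X)' := range(e_X)` and `KV₁^an(X) = GL(X)/GL(X)'`, one has
`GL(A)' = GL(B)' ∩ GL(A)`, and the induced sequence
`KV₁^an(A) → KV₁^an(B) → KV₁^an(C)` is exact with the first map injective. -/
theorem stmt12 {GA GB GC PGA PGB PGC : Type}
    [Group GA] [Group GB] [Group GC] [Group PGA] [Group PGB] [Group PGC]
    (i : GA →* GB) (p : GB →* GC) (s : GC →* GB)
    (iP : PGA →* PGB) (pP : PGB →* PGC) (sP : PGC →* PGB)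
    (eA : PGA →* GA) (eB : PGB →* GB) (eC : PGC →* GC)
    -- the extension is split
    (hsplit : p.comp s = MonoidHom.id GC)
    (hsplitP : pP.comp sP = MonoidHom.id PGC)
    -- `GL` and `GL(P̂(−))` preserve kernels
    (hinj : Function.Injective i) (hinjP : Function.Injective iP)
    (hker : i.range = p.ker) (hkerP : iP.range = pP.ker)
    -- naturality of the evaluation maps and of the splitting
    (hnat1 : eB.comp iP = i.comp eA) (hnat2 : eC.comp pP = p.comp eB)
    (hnat3 : eB.comp sP = s.comp eC)
    [hNA : (eA.range).Normal] [hNB : (eB.range).Normal] [hNC : (eC.range).Normal] :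
    -- `GL(A)' = GL(B)' ∩ GL(A)` (inside `GL(B)`)
    Subgroup.map i eA.range = eB.range ⊓ i.range ∧
    -- exactness of `KV₁^an(A) → KV₁^an(B) → KV₁^an(C)` with the first map injective
    ∃ (ibar : GA ⧸ eA.range →* GB ⧸ eB.range)
      (pbar : GB ⧸ eB.range →* GC ⧸ eC.range),
      (∀ g : GA, ibar (QuotientGroup.mk g) = QuotientGroup.mk (i g)) ∧
      (∀ g : GB, pbar (QuotientGroup.mk g) = QuotientGroup.mk (p g)) ∧
      Function.Injective ibar ∧ ibar.range = pbar.ker :=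
  stmt12_general i p s iP pP sP eA eB eC hsplitP hinj hker hkerP hnat1 hnat2 hnat3 (hNA := hNA)
    (hNB := hNB) (hNC := hNC)
end

section
/- Suppose A ↣ B ↠ C is an extension of complete, torsionfree bornological V-algebras such that GL(B)' → GL(C)' is surjective. Then there is an exact sequence KV_1^an(A) → KV_1^an(B) → KV_1^an(C) → K_0(A) → K_0(B) → K_0(C), where the connecting map KV_1^an(C) → K_0(A) is induced by the K-theory index map on K_1(C). -/
/-!
Descend the index map `d` along `q_C : K₁(C) ↠ KV₁^an(C)`: a class killed by `q_C` lifts to a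
class of `K₁(B)` (by the surjectivity of `GL(B)' → GL(C)'`), and `d` kills the image of `K₁(B)`.
Each of the three new exactness statements then follows from the exactness of the corresponding
piece of the K-theory sequence by a diagram chase through the surjections `K₁ ↠ KV₁^an` (the
identity on `K₀`).
-/

namespace Function.Exact

variable {A B C A' B' C' : Type*} [AddGroup A] [AddGroup B] [AddGroup C]
  [AddGroup A'] [AddGroup B'] [AddGroup C']
  {f : A →+ B} {g : B →+ C} {f' : A' →+ B'} {g' : B' →+ C'}
  {qA : A →+ A'} {qB : B →+ B'} {qC : C →+ C'}

theorem of_surjective_of_comm (hfg : Exact f g) (hqA : Surjective qA) (hqB : Surjective qB)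
    (hf : ∀ x, f' (qA x) = qB (f x)) (hg : ∀ y, g' (qB y) = qC (g y))
    (hqC : ∀ z, qC z = 0 → ∃ y, qB y = 0 ∧ g y = z) : Exact f' g' := by
  intro v
  obtain ⟨y, rfl⟩ := hqB v
  constructor
  · intro hy
    obtain ⟨y', hy'0, hy'⟩ := hqC (g y) ((hg y).symm.trans hy)
    obtain ⟨x, hx⟩ := (hfg (y - y')).mp (by rw [map_sub, hy', sub_self])
    exact ⟨qA x, by rw [hf, hx, map_sub, hy'0, sub_zero]⟩
  · rintro ⟨u, hu⟩
    obtain ⟨x, rfl⟩ := hqA u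
    rw [← hu, hf, hg, hfg.apply_apply_eq_zero, map_zero]

theorem of_surjective_of_comm_of_injective (hfg : Exact f g) (hqA : Surjective qA)
    (hqB : Surjective qB) (hf : ∀ x, f' (qA x) = qB (f x)) (hg : ∀ y, g' (qB y) = qC (g y))
    (hqC : Injective qC) : Exact f' g' :=
  hfg.of_surjective_of_comm hqA hqB hf hg fun z hz =>
    ⟨0, map_zero qB, by rw [map_zero, ← (injective_iff_map_eq_zero qC).mp hqC z hz]⟩

end Function.Exact

/-- Suppose `A ↣ B ↠ C` is an extension of complete, torsionfree
bornological `V`-algebras such that `GL(B)' → GL(C)'` is surjective.  Writing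
`K₁, K₀` for the algebraic K-groups (with their half-exact excision sequence
`K₁(A) → K₁(B) → K₁(C) →d K₀(A) → K₀(B) → K₀(C)`), `KV₁^an(X)` for the analytic
Karoubi–Villamayor group, `q_X : K₁(X) ↠ KV₁^an(X)` for the natural surjections, and
`kvAB, kvBC` for the induced maps, the surjectivity of `GL(B)' → GL(C)'` is encoded by
the hypothesis `hGL`.  Then there is an exact sequence
`KV₁^an(A) → KV₁^an(B) → KV₁^an(C) →δ K₀(A) → K₀(B) → K₀(C)` whose connecting map `δ`
is induced by the K-theory index map `d` on `K₁(C)` (i.e. `δ ∘ q_C = d`). -/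
theorem stmt17 {K1A K1B K1C K0A K0B K0C KV1A KV1B KV1C : Type}
    [AddCommGroup K1A] [AddCommGroup K1B] [AddCommGroup K1C]
    [AddCommGroup K0A] [AddCommGroup K0B] [AddCommGroup K0C]
    [AddCommGroup KV1A] [AddCommGroup KV1B] [AddCommGroup KV1C]
    (a1 : K1A →+ K1B) (b1 : K1B →+ K1C) (d : K1C →+ K0A)
    (a0 : K0A →+ K0B) (b0 : K0B →+ K0C)
    -- the K-theory excision sequence is exact
    (hex1 : Function.Exact a1 b1) (hex2 : Function.Exact b1 d)
    (hex3 : Function.Exact d a0) (hex4 : Function.Exact a0 b0)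
    -- the natural surjections `K₁ ↠ KV₁^an` and the induced maps on `KV₁^an`
    (qA : K1A →+ KV1A) (qB : K1B →+ KV1B) (qC : K1C →+ KV1C)
    (hqA : Function.Surjective qA) (hqB : Function.Surjective qB)
    (hqC : Function.Surjective qC)
    (kvAB : KV1A →+ KV1B) (kvBC : KV1B →+ KV1C)
    (hnat1 : ∀ x : K1A, kvAB (qA x) = qB (a1 x))
    (hnat2 : ∀ x : K1B, kvBC (qB x) = qC (b1 x))
    -- `GL(B)' → GL(C)'` is surjective
    (hGL : ∀ z : K1C, qC z = 0 → ∃ y : K1B, qB y = 0 ∧ b1 y = z) :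
    ∃ δ : KV1C →+ K0A,
      (∀ z : K1C, δ (qC z) = d z) ∧
      Function.Exact kvAB kvBC ∧ Function.Exact kvBC δ ∧
      Function.Exact δ a0 ∧ Function.Exact a0 b0 := by
  have hker : qC.ker ≤ d.ker := fun z hz => by
    obtain ⟨y, -, rfl⟩ := hGL z hz
    exact hex2.apply_apply_eq_zero y
  let δ := qC.liftOfSurjective hqC ⟨d, hker⟩
  have hδ : ∀ z, δ (qC z) = d z := qC.liftOfRightInverse_comp_apply _ _ ⟨d, hker⟩
  refine ⟨δ, hδ, hex1.of_surjective_of_comm hqA hqB hnat1 hnat2 hGL, ?_, ?_, hex4⟩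
  · exact hex2.of_surjective_of_comm_of_injective (qC := AddMonoidHom.id K0A) hqB hqC hnat2 hδ
      Function.injective_id
  · exact hex3.of_surjective_of_comm_of_injective (qB := AddMonoidHom.id K0A)
      (qC := AddMonoidHom.id K0B) hqC Function.surjective_id hδ (fun _ => rfl)
      Function.injective_id
end
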